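/- arXiv:1204.5633 — 2 statements merged into one kernel-verified Lean document; each statement's English description precedes it below -/
import Mathlib

section
/- Let (V_n)_{n∈ℕ} and (W_n)_{n∈ℕ} be two sequences of real-valued random variables on a common probability space such that (1) the sequence (W_n) is tight, and (2) for all k ∈ ℝ and all ε > 0, lim_{n→∞} P(V_n ≤ k, W_n ≥ k + ε) = 0 and lim_{n→∞} P(V_n ≥ k + ε, W_n ≤ k) = 0. Then V_n − W_n → 0 in probability as n → ∞. -/
/-!
Off an event of probability at most `η` (tightness), `W_n` lies in `[-K, K]`. Cut this interval
by a finite `ε/2`-grid: if `V_n - W_n ≥ ε` and `k` is the first grid point with `W_n ≤ k`, then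
`V_n ≥ k + ε/2`, an event of vanishing probability by the second hypothesis; `W_n - V_n ≥ ε` is
handled symmetrically by the first. Hence `P(|V_n - W_n| ≥ ε) ≤ η + o(1)`.
-/

open MeasureTheory Filter Topology

lemma exists_nat_mul_mem_Ico_of_le {x L δ : ℝ} (hδ : 0 < δ) (hx : 0 ≤ x) (hxL : x ≤ L) :
    ∃ j ≤ ⌈L / δ⌉₊, (j : ℝ) * δ ∈ Set.Ico x (x + δ) := by
  refine ⟨⌈x / δ⌉₊, Nat.ceil_mono (div_le_div_of_nonneg_right hxL hδ.le), ?_, ?_⟩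
  · exact (div_le_iff₀ hδ).mp (Nat.le_ceil _)
  · calc (⌈x / δ⌉₊ : ℝ) * δ < (x / δ + 1) * δ :=
          mul_lt_mul_of_pos_right (Nat.ceil_lt_add_one (div_nonneg hx hδ.le)) hδ
      _ = x + δ := by field_simp

lemma tendsto_zero_of_forall_le_add {ι : Type*} {l : Filter ι} {f : ι → ℝ} (hf : ∀ i, 0 ≤ f i)
    (h : ∀ δ > 0, ∃ g : ι → ℝ, Tendsto g l (𝓝 0) ∧ ∀ i, f i ≤ δ + g i) :
    Tendsto f l (𝓝 0) := by
  refine tendsto_order.2 ⟨fun a ha => .of_forall fun i => ha.trans_le (hf i), fun a ha => ?_⟩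
  obtain ⟨g, hg, hfg⟩ := h (a / 2) (half_pos ha)
  filter_upwards [hg.eventually (gt_mem_nhds (half_pos ha))] with i hi
  linarith [hfg i]

section

variable {Ω : Type*} [MeasurableSpace Ω] {P : Measure Ω} [IsFiniteMeasure P] {V W : ℕ → Ω → ℝ}

lemma tendsto_measureReal_abs_le_and_le_sub
    (h : ∀ (k ε : ℝ), 0 < ε → Tendsto (fun n => P.real {ω | k + ε ≤ V n ω ∧ W n ω ≤ k}) atTop (𝓝 0))
    (K : ℝ) {ε : ℝ} (hε : 0 < ε) :
    Tendsto (fun n => P.real {ω | |W n ω| ≤ K ∧ ε ≤ V n ω - W n ω}) atTop (𝓝 0) := by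
  set δ := ε / 2
  have hδ : 0 < δ := half_pos hε
  have hεδ : ε = 2 * δ := by ring
  set grid := Finset.range (⌈(2 * K) / δ⌉₊ + 1)
  have hcover : ∀ n, {ω | |W n ω| ≤ K ∧ ε ≤ V n ω - W n ω} ⊆
      ⋃ j ∈ grid, {ω | (-K + j * δ) + δ ≤ V n ω ∧ W n ω ≤ -K + j * δ} := by
    rintro n ω ⟨hWK, hVW⟩
    obtain ⟨j, hj, hlo, hhi⟩ := exists_nat_mul_mem_Ico_of_le hδ (x := W n ω + K) (L := 2 * K)
      (by linarith [neg_abs_le (W n ω)]) (by linarith [le_abs_self (W n ω)])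
    exact Set.mem_biUnion (Finset.mem_range_succ_iff.2 hj) ⟨by linarith, by linarith⟩
  have hsum := tendsto_finsetSum grid fun j _ => h (-K + j * δ) δ hδ
  rw [Finset.sum_const_zero] at hsum
  refine squeeze_zero (fun _ => measureReal_nonneg) (fun n => ?_) hsum
  exact (measureReal_mono (hcover n) (measure_ne_top _ _)).trans (measureReal_biUnion_finset_le _ _)

lemma tendsto_measureReal_abs_le_and_le_abs_sub
    (h1 : ∀ (k ε : ℝ), 0 < ε →
      Tendsto (fun n => P.real {ω | V n ω ≤ k ∧ k + ε ≤ W n ω}) atTop (𝓝 0))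
    (h2 : ∀ (k ε : ℝ), 0 < ε →
      Tendsto (fun n => P.real {ω | k + ε ≤ V n ω ∧ W n ω ≤ k}) atTop (𝓝 0))
    (K : ℝ) {ε : ℝ} (hε : 0 < ε) :
    Tendsto (fun n => P.real {ω | |W n ω| ≤ K ∧ ε ≤ |V n ω - W n ω|}) atTop (𝓝 0) := by
  -- `h1` for `(V, W)` is `h2` for `(-V, -W)`.
  have h1_neg : ∀ (k ε : ℝ), 0 < ε → Tendsto
      (fun n => P.real {ω | k + ε ≤ (-V n) ω ∧ (-W n) ω ≤ k}) atTop (𝓝 0) := by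
    intro k ε hε
    convert h1 (-k - ε) ε hε using 5 with n ω
    simp only [Pi.neg_apply]
    constructor <;> rintro ⟨h, h'⟩ <;> constructor <;> linarith
  have hsum := (tendsto_measureReal_abs_le_and_le_sub h2 K hε).add
    (tendsto_measureReal_abs_le_and_le_sub h1_neg K hε)
  rw [add_zero] at hsum
  refine squeeze_zero (fun _ => measureReal_nonneg) (fun n => ?_) hsum
  refine (measureReal_mono (fun ω hω => ?_) (measure_ne_top _ _)).trans
    (measureReal_union_le _ _)
  obtain ⟨hWK, hVW⟩ := hω
  simp only [Set.mem_union, Set.mem_ofPred_eq, Pi.neg_apply, abs_neg]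
  exact (le_abs.mp hVW).imp (⟨hWK, ·⟩) fun h => ⟨hWK, by linarith⟩

end

/-- Ghosh's (1971) lemma: if `(W_n)` is tight and for all `k ∈ ℝ`, `ε > 0` both
`P(V_n ≤ k, W_n ≥ k + ε) → 0` and `P(V_n ≥ k + ε, W_n ≤ k) → 0`, then
`V_n - W_n → 0` in probability. -/
theorem ghosh_lemma
    {Ω : Type*} [MeasurableSpace Ω] (P : Measure Ω) [IsProbabilityMeasure P]
    (V W : ℕ → Ω → ℝ)
    (htight : ∀ δ : ℝ, 0 < δ → ∃ K : ℝ, 0 < K ∧ ∀ n, (P {ω | K < |W n ω|}).toReal ≤ δ)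
    (h1 : ∀ (k ε : ℝ), 0 < ε →
      Tendsto (fun n => (P {ω | V n ω ≤ k ∧ k + ε ≤ W n ω}).toReal) atTop (nhds 0))
    (h2 : ∀ (k ε : ℝ), 0 < ε →
      Tendsto (fun n => (P {ω | k + ε ≤ V n ω ∧ W n ω ≤ k}).toReal) atTop (nhds 0)) :
    TendstoInMeasure P (fun n ω => V n ω - W n ω) atTop (fun _ => (0 : ℝ)) := by
  simp only [← measureReal_def] at htight h1 h2
  rw [tendstoInMeasure_iff_measureReal_norm]
  intro ε hε
  refine tendsto_zero_of_forall_le_add (fun _ => measureReal_nonneg) fun η hη => ?_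
  obtain ⟨K, -, hK⟩ := htight η hη
  refine ⟨_, tendsto_measureReal_abs_le_and_le_abs_sub h1 h2 K hε, fun n => ?_⟩
  calc P.real {ω | ε ≤ ‖V n ω - W n ω - 0‖}
      ≤ P.real ({ω | K < |W n ω|} ∪ {ω | |W n ω| ≤ K ∧ ε ≤ |V n ω - W n ω|}) := by
        refine measureReal_mono (fun ω hω => ?_)
        rw [Set.mem_ofPred_eq, sub_zero, Real.norm_eq_abs] at hω
        exact (lt_or_ge K |W n ω|).imp id (⟨·, hω⟩)
    _ ≤ P.real {ω | K < |W n ω|} + P.real {ω | |W n ω| ≤ K ∧ ε ≤ |V n ω - W n ω|} :=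
        measureReal_union_le _ _
    _ ≤ _ := add_le_add (hK n) le_rfl
end

section
/- Let (X_n)_{n∈ℤ} be a stationary, strongly mixing sequence with distribution function F, p ∈ (0,1), t_p = F^{-1}(p), and assume ∑_{n=1}^∞ α(n) < ∞ and that F is continuous at t_p with F(t_p) = p. Then for every fixed t ∈ ℝ and every ρ > 0, E[(√n (p − F_n(t_p) − F(t_p + t·n^{−1/(2ρ)}) + F_n(t_p + t·n^{−1/(2ρ)})))²] → 0 as n → ∞; in particular √n (p − F_n(t_p) − F(t_p + t·n^{−1/(2ρ)}) + F_n(t_p + t·n^{−1/(2ρ)})) → 0 in probability. -/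
open MeasureTheory ProbabilityTheory Filter

noncomputable section

/-- The σ-field generated by the random variables `X i`, `i ∈ S`. -/
def sigmaOf {Ω : Type*} (X : ℤ → Ω → ℝ) (S : Set ℤ) : MeasurableSpace Ω :=
  ⨆ i ∈ S, MeasurableSpace.comap (X i) inferInstance

/-- The strong mixing (α-mixing) coefficients of the sequence `X`:
`α(k) = sup {|P(A ∩ B) - P(A)P(B)| : A ∈ F_1^n, B ∈ F_{n+k}^∞, n ∈ ℤ}`. -/
def alphaMix {Ω : Type*} [MeasurableSpace Ω] (P : Measure Ω) (X : ℤ → Ω → ℝ) (k : ℕ) : ℝ :=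
  sSup { r : ℝ | ∃ (n : ℤ) (A B : Set Ω),
    MeasurableSet[sigmaOf X (Set.Icc 1 n)] A ∧
    MeasurableSet[sigmaOf X (Set.Ici (n + k))] B ∧
    r = |(P (A ∩ B)).toReal - (P A).toReal * (P B).toReal| }

/-- Stationarity of the doubly infinite sequence `X`. -/
def IsStationaryZ {Ω : Type*} [MeasurableSpace Ω] (P : Measure Ω) (X : ℤ → Ω → ℝ) : Prop :=
  ∀ k : ℤ, Measure.map (fun ω => fun n : ℤ => X (n + k) ω) P
      = Measure.map (fun ω => fun n : ℤ => X n ω) P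

/-- Strong mixing: the mixing coefficients tend to zero. -/
def StronglyMixing {Ω : Type*} [MeasurableSpace Ω] (P : Measure Ω) (X : ℤ → Ω → ℝ) : Prop :=
  Tendsto (alphaMix P X) atTop (nhds 0)

/-- Empirical distribution function of `X_1, …, X_n`. -/
def empDF {Ω : Type*} (X : ℤ → Ω → ℝ) (n : ℕ) (t : ℝ) (ω : Ω) : ℝ :=
  (∑ i ∈ Finset.range n, if X ((i : ℤ) + 1) ω ≤ t then (1 : ℝ) else 0) / n

/-- Empirical `p`-quantile of the sample `X_1, …, X_n`. -/
def sampleQuantile {Ω : Type*} (X : ℤ → Ω → ℝ) (n : ℕ) (p : ℝ) (ω : Ω) : ℝ :=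
  sInf { t : ℝ | p ≤ empDF X n t ω }

/-! For `u ≤ v`, with `D_i = {u < X_i ≤ v}` and `c = F v - F u = P(D_i)`, the quantity
`√n (F_n v - F_n u - (F v - F u))` equals `n^{-1/2} ∑_{i ≤ n} (1_{D_i} - c)`, so its second moment is
`n⁻¹ ∑_{i,j} Cov(1_{D_i}, 1_{D_j})`. Each covariance is at most `c` and, since `D_i` depends on `X_i`
alone, at most `α(|i - j|)`; hence the second moment is at most `2 ∑_k min(c, α(k))`. Continuity of
`F` at `t_p` makes `c → 0`, and summability of `α` lets dominated convergence for series send this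
bound to `0`. Convergence in probability then follows from convergence in `L²`. -/

open Finset Topology
open scoped ENNReal

lemma sum_natAbs_sub_le_two_mul_tsum {φ : ℕ → ℝ} (hφ : 0 ≤ φ) (hs : Summable φ)
    (s : Finset ℕ) (i : ℕ) : ∑ j ∈ s, φ ((j : ℤ) - i).natAbs ≤ 2 * ∑' k, φ k := by
  have hinj : ∀ t : Finset ℕ, Set.InjOn (fun j : ℕ => ((j : ℤ) - i).natAbs) t →
      ∑ j ∈ t, φ ((j : ℤ) - i).natAbs ≤ ∑' k, φ k := fun t ht => by
    rw [← sum_image ht]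
    exact hs.sum_le_tsum _ fun k _ => hφ k
  rw [← sum_filter_add_sum_filter_not s (i ≤ ·), two_mul]
  refine add_le_add (hinj _ fun a ha b hb h => ?_) (hinj _ fun a ha b hb h => ?_) <;>
    simp only [coe_filter, Set.mem_ofPred_eq] at ha hb h <;> omega

lemma sum_sum_natAbs_sub_le {φ : ℕ → ℝ} (hφ : 0 ≤ φ) (hs : Summable φ) (s : Finset ℕ) :
    ∑ i ∈ s, ∑ j ∈ s, φ ((j : ℤ) - i).natAbs ≤ s.card * (2 * ∑' k, φ k) := by
  simpa using sum_le_card_nsmul s _ _ fun i _ => sum_natAbs_sub_le_two_mul_tsum hφ hs s i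

lemma tendsto_tsum_min_zero {ι : Type*} {l : Filter ι} {a : ℕ → ℝ} (ha : 0 ≤ a) (hs : Summable a)
    {c : ι → ℝ} (hc0 : 0 ≤ c) (hc : Tendsto c l (𝓝 0)) :
    Tendsto (fun n => ∑' k, min (c n) (a k)) l (𝓝 0) := by
  have hmin : ∀ k, Tendsto (fun n => min (c n) (a k)) l (𝓝 0) := fun k => by
    simpa only [min_eq_left (show (0 : ℝ) ≤ a k from ha k)] using
      hc.min (tendsto_const_nhds (x := a k))
  simpa using tendsto_tsum_of_dominated_convergence hs hmin <| .of_forall fun n k => by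
    rw [Real.norm_of_nonneg (le_min (hc0 n) (ha k))]
    exact min_le_right _ _

lemma tendstoInMeasure_of_tendsto_integral_sq {Ω ι : Type*} [MeasurableSpace Ω] {P : Measure Ω}
    {l : Filter ι} {f : ι → Ω → ℝ} (hf : ∀ n, MemLp (f n) 2 P)
    (h : Tendsto (fun n => ∫ ω, f n ω ^ 2 ∂P) l (𝓝 0)) :
    TendstoInMeasure P f l 0 := by
  refine tendstoInMeasure_of_tendsto_eLpNorm two_ne_zero (fun n => (hf n).1)
    aestronglyMeasurable_const ?_
  have hsqrt := ENNReal.tendsto_ofReal h.sqrt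
  rw [Real.sqrt_zero, ENNReal.ofReal_zero] at hsqrt
  refine hsqrt.congr fun n => ?_
  rw [sub_zero, (hf n).eLpNorm_eq_integral_rpow_norm two_ne_zero ENNReal.ofNat_ne_top,
    Real.sqrt_eq_rpow]
  norm_num

section Probability

variable {Ω : Type*} [MeasurableSpace Ω] (P : Measure Ω) [IsProbabilityMeasure P]

lemma covariance_indicator_one {A B : Set Ω} (hA : MeasurableSet A) (hB : MeasurableSet B) :
    cov[A.indicator 1, B.indicator 1; P] = P.real (A ∩ B) - P.real A * P.real B := by
  have hA2 : MemLp (A.indicator (1 : Ω → ℝ)) 2 P := (memLp_const 1).indicator hA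
  have hB2 : MemLp (B.indicator (1 : Ω → ℝ)) 2 P := (memLp_const 1).indicator hB
  rw [covariance_eq_sub hA2 hB2, ← Set.inter_indicator_one, integral_indicator_one (hA.inter hB),
    integral_indicator_one hA, integral_indicator_one hB]

lemma abs_measureReal_inter_sub_mul_le_left (A B : Set Ω) :
    |P.real (A ∩ B) - P.real A * P.real B| ≤ P.real A := by
  have : P.real (A ∩ B) ≤ P.real A := measureReal_mono Set.inter_subset_left
  have : 0 ≤ P.real (A ∩ B) := measureReal_nonneg
  have : P.real B ≤ 1 := measureReal_le_one
  have : 0 ≤ P.real A := measureReal_nonneg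
  have : 0 ≤ P.real B := measureReal_nonneg
  rw [abs_le]
  constructor <;> nlinarith

end Probability

lemma comap_le_sigmaOf {Ω : Type*} (X : ℤ → Ω → ℝ) {S : Set ℤ} {i : ℤ} (hi : i ∈ S) :
    MeasurableSpace.comap (X i) inferInstance ≤ sigmaOf X S :=
  le_iSup₂ (f := fun j (_ : j ∈ S) => MeasurableSpace.comap (X j) inferInstance) i hi

section Mixing

variable {Ω : Type*} [MeasurableSpace Ω] (P : Measure Ω) [IsProbabilityMeasure P] (X : ℤ → Ω → ℝ)

lemma abs_measureReal_inter_sub_mul_le_alphaMix {n : ℤ} {k : ℕ} {A B : Set Ω}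
    (hA : MeasurableSet[sigmaOf X (Set.Icc 1 n)] A)
    (hB : MeasurableSet[sigmaOf X (Set.Ici (n + k))] B) :
    |P.real (A ∩ B) - P.real A * P.real B| ≤ alphaMix P X k := by
  refine le_csSup ⟨1, ?_⟩ ⟨n, A, B, hA, hB, rfl⟩
  rintro r ⟨-, A', B', -, -, rfl⟩
  exact (abs_measureReal_inter_sub_mul_le_left P A' B').trans measureReal_le_one

lemma alphaMix_nonneg (k : ℕ) : 0 ≤ alphaMix P X k :=
  (abs_nonneg _).trans <| abs_measureReal_inter_sub_mul_le_alphaMix P X (n := 0)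
    (MeasurableSpace.measurableSet_empty _) (MeasurableSpace.measurableSet_empty _)

lemma abs_measureReal_inter_sub_mul_le_alphaMix_natAbs {i j : ℤ} (hi : 1 ≤ i) (hj : 1 ≤ j)
    {A B : Set Ω} (hA : MeasurableSet[MeasurableSpace.comap (X i) inferInstance] A)
    (hB : MeasurableSet[MeasurableSpace.comap (X j) inferInstance] B) :
    |P.real (A ∩ B) - P.real A * P.real B| ≤ alphaMix P X (j - i).natAbs := by
  wlog hij : i ≤ j generalizing i j A B
  · rw [Set.inter_comm, mul_comm, ← Int.natAbs_neg, neg_sub]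
    exact this hj hi hB hA (by omega)
  have hj' : j = i + ((j - i).natAbs : ℕ) := by omega
  refine abs_measureReal_inter_sub_mul_le_alphaMix P X
    (comap_le_sigmaOf X (Set.mem_Icc.2 ⟨hi, le_rfl⟩) _ hA) ?_
  exact comap_le_sigmaOf X (S := Set.Ici _) (hj' ▸ Set.mem_Ici.2 le_rfl) _ hB

end Mixing

lemma empDF_sub_empDF {Ω : Type*} (X : ℤ → Ω → ℝ) (n : ℕ) {a b : ℝ} (hab : a ≤ b) (ω : Ω) :
    empDF X n b ω - empDF X n a ω
      = (∑ i ∈ range n, (X (i + 1) ⁻¹' Set.Ioc a b).indicator 1 ω) / n := by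
  rw [empDF, empDF, ← sub_div, ← sum_sub_distrib]
  congr 1
  refine sum_congr rfl fun i _ => ?_
  by_cases ha : X (i + 1) ω ≤ a
  · simp [ha, ha.trans hab]
  · by_cases hb : X (i + 1) ω ≤ b <;> simp [ha, hb, lt_of_not_ge ha]

section Empirical

variable {Ω : Type*} [MeasurableSpace Ω] {P : Measure Ω} [IsProbabilityMeasure P]
  {X : ℤ → Ω → ℝ} {F : ℝ → ℝ}

lemma measureReal_preimage_Ioc {i : ℤ} (hX : Measurable (X i))
    (hF : ∀ t, F t = P.real {ω | X i ω ≤ t}) {a b : ℝ} (hab : a ≤ b) :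
    P.real (X i ⁻¹' Set.Ioc a b) = F b - F a := by
  have hdiff : X i ⁻¹' Set.Ioc a b = {ω | X i ω ≤ b} \ {ω | X i ω ≤ a} := by
    ext ω
    simp only [Set.mem_preimage, Set.mem_Ioc, Set.mem_sdiff, Set.mem_ofPred_eq, not_le]
    tauto
  have hsub : {ω | X i ω ≤ a} ⊆ {ω | X i ω ≤ b} := fun ω (h : X i ω ≤ a) => h.trans hab
  rw [hdiff, measureReal_sdiff hsub (hX measurableSet_Iic), ← hF, ← hF]

lemma memLp_empDF {q : ℝ≥0∞} (hX : ∀ i, Measurable (X i)) (n : ℕ) (t : ℝ) :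
    MemLp (empDF X n t) q P := by
  have hterm : ∀ i : ℕ, MemLp (fun ω => if X (i + 1) ω ≤ t then (1 : ℝ) else 0) q P := by
    intro i
    convert (memLp_const (μ := P) (1 : ℝ)).indicator (hX (i + 1) (measurableSet_Iic (a := t)))
      using 1
    ext ω
    by_cases h : X (i + 1) ω ≤ t <;> simp [h]
  convert (memLp_finsetSum (range n) fun i _ => hterm i).mul_const (n : ℝ)⁻¹ using 1
  exact funext fun ω => div_eq_mul_inv _ _

lemma abs_covariance_indicator_Ioc_le (hX : ∀ i, Measurable (X i))
    (hF : ∀ (i : ℤ) (t : ℝ), F t = P.real {ω | X i ω ≤ t}) {u v : ℝ} (huv : u ≤ v) (i j : ℕ) :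
    |cov[(X (i + 1) ⁻¹' Set.Ioc u v).indicator 1, (X (j + 1) ⁻¹' Set.Ioc u v).indicator 1; P]|
      ≤ min (F v - F u) (alphaMix P X ((j : ℤ) - i).natAbs) := by
  rw [covariance_indicator_one P (hX _ measurableSet_Ioc) (hX _ measurableSet_Ioc)]
  refine le_min ?_ ?_
  · rw [← measureReal_preimage_Ioc (hX (i + 1)) (hF _) huv]
    exact abs_measureReal_inter_sub_mul_le_left P _ _
  · exact abs_measureReal_inter_sub_mul_le_alphaMix_natAbs P X (i := i + 1) (j := j + 1)
      (by omega) (by omega) ⟨_, measurableSet_Ioc, rfl⟩ ⟨_, measurableSet_Ioc, rfl⟩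
      |>.trans_eq (by congr 1; omega)

lemma integral_sq_sqrt_mul_empDF_increment_le (hX : ∀ i, Measurable (X i))
    (hF : ∀ (i : ℤ) (t : ℝ), F t = P.real {ω | X i ω ≤ t}) (hsum : Summable (alphaMix P X))
    (n : ℕ) (u v : ℝ) :
    ∫ ω, (√n * (empDF X n v ω - empDF X n u ω - (F v - F u))) ^ 2 ∂P
      ≤ 2 * ∑' k, min |F v - F u| (alphaMix P X k) := by
  wlog huv : u ≤ v generalizing u v
  · convert this v u (le_of_not_ge huv) using 3
    · ring
    · rw [abs_sub_comm]
  set c := F v - F u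
  set D : ℕ → Set Ω := fun i => X (i + 1) ⁻¹' Set.Ioc u v
  set S : Ω → ℝ := ∑ i ∈ range n, (D i).indicator 1
  set φ : ℕ → ℝ := fun k => min c (alphaMix P X k)
  have hD : ∀ i, MeasurableSet (D i) := fun i => hX _ measurableSet_Ioc
  have hPD : ∀ i, P.real (D i) = c := fun i => measureReal_preimage_Ioc (hX _) (hF _) huv
  have hc : 0 ≤ c := hPD 0 ▸ measureReal_nonneg
  have hφ : 0 ≤ φ := fun k => le_min hc (alphaMix_nonneg P X k)
  have hφs : Summable φ := hsum.of_nonneg_of_le hφ fun k => min_le_right _ _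
  have hES : P[S] = n * c := by
    simp_rw [S, Finset.sum_apply]
    rw [integral_finsetSum _ fun i _ => (integrable_const 1).indicator (hD i)]
    simp [integral_indicator_one (hD _), hPD]
  have hpt : ∀ ω, √n * (empDF X n v ω - empDF X n u ω - c) = (S ω - P[S]) / √n := by
    intro ω
    rcases n.eq_zero_or_pos with rfl | hn
    · simp
    rw [empDF_sub_empDF X n huv, hES]
    simp only [S, D, Finset.sum_apply]
    have hn' : (0 : ℝ) < n := by exact_mod_cast hn
    field_simp
    rw [Real.sq_sqrt hn'.le]
  rw [abs_of_nonneg hc]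
  calc ∫ ω, (√n * (empDF X n v ω - empDF X n u ω - c)) ^ 2 ∂P
      = cov[S, S; P] / n := by
        simp_rw [hpt, div_pow, Real.sq_sqrt n.cast_nonneg, sq]
        rw [covariance, integral_div]
    _ = (∑ i ∈ range n, ∑ j ∈ range n, cov[(D i).indicator 1, (D j).indicator 1; P]) / n := by
        rw [covariance_sum_sum']
        all_goals exact fun i _ => (memLp_const 1).indicator (hD i)
    _ ≤ 2 * ∑' k, φ k := by
        refine div_le_of_le_mul₀ n.cast_nonneg (mul_nonneg zero_le_two (tsum_nonneg hφ)) ?_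
        calc _ ≤ ∑ i ∈ range n, ∑ j ∈ range n, φ ((j : ℤ) - i).natAbs :=
              sum_le_sum fun i _ => sum_le_sum fun j _ =>
                (le_abs_self _).trans (abs_covariance_indicator_Ioc_le hX hF huv i j)
          _ ≤ _ := by simpa [mul_comm] using sum_sum_natAbs_sub_le hφ hφs (range n)

end Empirical

theorem empirical_increment_second_moment_general
    {Ω : Type*} [MeasurableSpace Ω] (P : Measure Ω) [IsProbabilityMeasure P]
    (X : ℤ → Ω → ℝ) (hmeas : ∀ i, Measurable (X i))
    (F : ℝ → ℝ) (hF : ∀ (i : ℤ) (t : ℝ), F t = (P {ω | X i ω ≤ t}).toReal)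
    (p : ℝ)
    (tp : ℝ)
    (hcont : ContinuousAt F tp) (hFtp : F tp = p)
    (hsum : Summable (alphaMix P X)) :
    ∀ (t ρ : ℝ), 0 < ρ →
      (Tendsto
        (fun n : ℕ => ∫ ω,
          (Real.sqrt n * (p - empDF X n tp ω
            - F (tp + t * (n : ℝ) ^ (-(1 / (2 * ρ))))
            + empDF X n (tp + t * (n : ℝ) ^ (-(1 / (2 * ρ)))) ω)) ^ 2 ∂P)
        atTop (nhds 0)) ∧
      TendstoInMeasure P
        (fun (n : ℕ) ω =>
          Real.sqrt n * (p - empDF X n tp ω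
            - F (tp + t * (n : ℝ) ^ (-(1 / (2 * ρ))))
            + empDF X n (tp + t * (n : ℝ) ^ (-(1 / (2 * ρ)))) ω))
        atTop (fun _ => (0 : ℝ)) := by
  intro t ρ hρ
  set s : ℕ → ℝ := fun n => tp + t * (n : ℝ) ^ (-(1 / (2 * ρ)))
  have hs : Tendsto s atTop (𝓝 tp) := by
    have hpow : Tendsto (fun n : ℕ => (n : ℝ) ^ (-(1 / (2 * ρ)))) atTop (𝓝 0) :=
      (tendsto_rpow_neg_atTop (by positivity)).comp tendsto_natCast_atTop_atTop
    simpa only [mul_zero, add_zero] using (hpow.const_mul t).const_add tp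
  have hc : Tendsto (fun n => |F (s n) - F tp|) atTop (𝓝 0) := by
    simpa using ((hcont.tendsto.comp hs).sub_const (F tp)).abs
  have hL2 : Tendsto (fun n : ℕ => ∫ ω, (√n * (p - empDF X n tp ω - F (s n)
      + empDF X n (s n) ω)) ^ 2 ∂P) atTop (𝓝 0) := by
    refine squeeze_zero (fun n => integral_nonneg fun ω => sq_nonneg _) (fun n => ?_)
      (by simpa using (tendsto_tsum_min_zero (alphaMix_nonneg P X) hsum (fun n => abs_nonneg _)
        hc).const_mul 2)
    convert integral_sq_sqrt_mul_empDF_increment_le hmeas hF hsum n tp (s n) using 4 with ω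
    rw [← hFtp]
    ring
  refine ⟨hL2, tendstoInMeasure_of_tendsto_integral_sq (fun n => ?_) hL2⟩
  exact ((((memLp_const p).sub (memLp_empDF hmeas n tp)).sub (memLp_const _)).add
    (memLp_empDF hmeas n _)).const_mul _

/-- Key second-moment estimate in the proof of the weak Bahadur representation:
`E[(√n (p - F_n(t_p) - F(t_p + t n^{-1/(2ρ)}) + F_n(t_p + t n^{-1/(2ρ)})))²] → 0`,
and in particular the quantity tends to `0` in probability. -/
theorem empirical_increment_second_moment
    {Ω : Type*} [MeasurableSpace Ω] (P : Measure Ω) [IsProbabilityMeasure P]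
    (X : ℤ → Ω → ℝ) (hmeas : ∀ i, Measurable (X i))
    (hstat : IsStationaryZ P X) (hmix : StronglyMixing P X)
    (F : ℝ → ℝ) (hF : ∀ (i : ℤ) (t : ℝ), F t = (P {ω | X i ω ≤ t}).toReal)
    (p : ℝ) (hp : p ∈ Set.Ioo (0 : ℝ) 1)
    (tp : ℝ) (htp : tp = sInf { t : ℝ | p ≤ F t })
    (hcont : ContinuousAt F tp) (hFtp : F tp = p)
    (hsum : Summable (alphaMix P X)) :
    ∀ (t ρ : ℝ), 0 < ρ →
      (Tendsto
        (fun n : ℕ => ∫ ω,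
          (Real.sqrt n * (p - empDF X n tp ω
            - F (tp + t * (n : ℝ) ^ (-(1 / (2 * ρ))))
            + empDF X n (tp + t * (n : ℝ) ^ (-(1 / (2 * ρ)))) ω)) ^ 2 ∂P)
        atTop (nhds 0)) ∧
      TendstoInMeasure P
        (fun (n : ℕ) ω =>
          Real.sqrt n * (p - empDF X n tp ω
            - F (tp + t * (n : ℝ) ^ (-(1 / (2 * ρ))))
            + empDF X n (tp + t * (n : ℝ) ^ (-(1 / (2 * ρ)))) ω))
        atTop (fun _ => (0 : ℝ)) :=
  empirical_increment_second_moment_general P X hmeas F hF p tp hcont hFtp hsum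
end
end
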